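/- arXiv:2203.16803 — 3 statements merged into one kernel-verified Lean document; each statement's English description precedes it below -/
import Mathlib

section
/- Let M be a finite MDP with alarm region, let x_0 ∉ X_a be the initial state, and let Δ_1,…,Δ_T ∈ [0,1]. Then the supremum of J_M(π) over all history-dependent policies π of M satisfying, for every i ∈ {1,…,T}, P^π(|{t ∈ {0,…,T} : X_t ∈ X_a}| ≥ i) ≤ Δ_i, equals the supremum of Ĵ(π̂) over all Markov policies π̂ of the counting augmented MDP of M satisfying P^π̂(Y_T ≥ i) ≤ Δ_i for every i ∈ {1,…,T}. -/
/-!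
The alarm counter is a deterministic function of the state history, and it never saturates:
at most `t` alarms occur at times `1, …, t`, and `x₀` raises none. So every augmented trajectory
of positive mass is the lift of its state sequence, a lifted trajectory has the probability,
rewards and alarm count of the original one, and history-dependent policies transfer along the
lift in both directions.

On the augmented MDP a history-dependent policy `p` is then replaced by the Markov policy
`q_t(a | x) = P^p(X_t = x, A_t = a) / P^p(X_t = x)`. By induction on `t`, `q` and `p` have the
same state–action marginals, and both the objective and the law of the final state (which
carries the final counter `Y_T`) depend on the policy only through these marginals.
-/

/- Common framework: finite MDPs with alarm region, trajectories,
   history-dependent policies, trajectory laws, objectives. -/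

attribute [local instance] Classical.propDecidable

noncomputable section

/-- A finite MDP with alarm region `Xa`, horizon `T ≥ 1`, transition pmf `P`,
running rewards `r` and terminal reward `rT`. -/
structure MDP (X A : Type) [Fintype X] [Fintype A] where
  T : ℕ
  hT : 1 ≤ T
  P : X → A → X → ℝ
  P_nonneg : ∀ x a x', 0 ≤ P x a x'
  P_sum : ∀ x a, ∑ x', P x a x' = 1
  r : Fin T → X → A → ℝ
  rT : X → ℝ
  Xa : Set X

variable {X A : Type} [Fintype X] [Fintype A]

/-- A trajectory `(x₀,…,x_T, a₀,…,a_{T-1})`. -/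
abbrev Traj (M : MDP X A) := (Fin (M.T + 1) → X) × (Fin M.T → A)

/-- A history-dependent randomized policy: at each time `t < T` it maps the
history `(x₀,…,x_t, a₀,…,a_{t-1})` to a pmf on actions. -/
structure HistPolicy (M : MDP X A) where
  π : (t : Fin M.T) → (Fin (t.val + 1) → X) → (Fin t.val → A) → A → ℝ
  nonneg : ∀ t xs as a, 0 ≤ π t xs as a
  sum_one : ∀ t xs as, ∑ a, π t xs as a = 1

/-- A policy is Markov if at each time it depends only on the current state. -/
def IsMarkov {M : MDP X A} (p : HistPolicy M) : Prop :=
  ∀ (t : Fin M.T) (xs xs' : Fin (t.val + 1) → X) (as as' : Fin t.val → A),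
    xs (Fin.last t.val) = xs' (Fin.last t.val) → p.π t xs as = p.π t xs' as'

/-- The state part of the history at time `t` determined by a trajectory. -/
def histStates {M : MDP X A} (τ : Traj M) (t : Fin M.T) : Fin (t.val + 1) → X :=
  fun i => τ.1 (Fin.castLE (by have := t.isLt; omega) i)

/-- The action part of the history at time `t` determined by a trajectory. -/
def histActs {M : MDP X A} (τ : Traj M) (t : Fin M.T) : Fin t.val → A :=
  fun i => τ.2 (Fin.castLE (by have := t.isLt; omega) i)

/-- The probability mass of a trajectory under policy `p` with initial state `x0`. -/
def trajProb (M : MDP X A) (p : HistPolicy M) (x0 : X) (τ : Traj M) : ℝ :=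
  (if τ.1 0 = x0 then (1 : ℝ) else 0) *
    ∏ t : Fin M.T,
      p.π t (histStates τ t) (histActs τ t) (τ.2 t) *
        M.P (τ.1 t.castSucc) (τ.2 t) (τ.1 t.succ)

/-- Probability of an event (a set of trajectories) under the trajectory law. -/
def probEvent (M : MDP X A) (p : HistPolicy M) (x0 : X) (E : Traj M → Prop) : ℝ :=
  ∑ τ : Traj M, if E τ then trajProb M p x0 τ else 0

/-- The objective `J_M(π) = E[Σ_t r_t(X_t,A_t) + r_T(X_T)]`. -/
def J (M : MDP X A) (p : HistPolicy M) (x0 : X) : ℝ :=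
  ∑ τ : Traj M, trajProb M p x0 τ *
    (∑ t : Fin M.T, M.r t (τ.1 t.castSucc) (τ.2 t) + M.rT (τ.1 (Fin.last M.T)))

private lemma ite_nonneg'' {c : Prop} [Decidable c] {v : ℝ} (h : 0 ≤ v) :
    0 ≤ if c then v else 0 := by
  split
  · exact h
  · exact le_rfl
/-- The counting augmented MDP: the extra `Fin (T+1)` state records the number
of alarms triggered so far (saturating at `T`). -/
def countAug (M : MDP X A) : MDP (X × Fin (M.T + 1)) A where
  T := M.T
  hT := M.hT
  P := fun s a s' =>
    if s'.2 = (⟨min (s.2.val + (if s'.1 ∈ M.Xa then 1 else 0)) M.T,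
        by omega⟩ : Fin (M.T + 1)) then M.P s.1 a s'.1 else 0
  P_nonneg := fun s a s' => ite_nonneg'' (M.P_nonneg s.1 a s'.1)
  P_sum := by
    intro s a
    rw [Fintype.sum_prod_type]
    have h : ∀ x' : X,
        (∑ y : Fin (M.T + 1),
          if y = (⟨min (s.2.val + (if x' ∈ M.Xa then 1 else 0)) M.T,
              by omega⟩ : Fin (M.T + 1)) then M.P s.1 a x' else 0)
          = M.P s.1 a x' := by
      intro x'; simp
    rw [Finset.sum_congr rfl fun x' _ => h x']
    exact M.P_sum s.1 a
  r := fun t s a => M.r t s.1 a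
  rT := fun s => M.rT s.1
  Xa := {s | s.1 ∈ M.Xa}

theorem Fin.sum_pi_snoc {β M : Type*} [Fintype β] [AddCommMonoid M] {n : ℕ}
    (F : (Fin (n + 1) → β) → M) :
    ∑ f, F f = ∑ g : Fin n → β, ∑ y, F (Fin.snoc g y) := by
  rw [← (Fin.snocEquiv fun _ => β).sum_comp, Fintype.sum_prod_type, Finset.sum_comm]
  rfl

namespace HistPolicy

variable {N : MDP X A}

def prefixProb (p : HistPolicy N) (x0 : X) (t : ℕ) (ht : t ≤ N.T)
    (xs : Fin (t + 1) → X) (as : Fin t → A) : ℝ :=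
  (if xs 0 = x0 then 1 else 0) *
    ∏ s : Fin t,
      p.π ⟨s, s.isLt.trans_le ht⟩ (Fin.take (s + 1) (by omega) xs) (Fin.take s s.isLt.le as)
          (as s) *
        N.P (xs s.castSucc) (as s) (xs s.succ)

def prefixExpect (p : HistPolicy N) (x0 : X) (t : ℕ) (ht : t ≤ N.T)
    (F : (Fin (t + 1) → X) → (Fin t → A) → ℝ) : ℝ :=
  ∑ xs, ∑ as, p.prefixProb x0 t ht xs as * F xs as

variable (p : HistPolicy N) (x0 : X)

theorem prefixProb_nonneg (t : ℕ) (ht : t ≤ N.T) (xs : Fin (t + 1) → X) (as : Fin t → A) :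
    0 ≤ p.prefixProb x0 t ht xs as :=
  mul_nonneg (by split_ifs <;> norm_num)
    (Finset.prod_nonneg fun _ _ => mul_nonneg (p.nonneg ..) (N.P_nonneg ..))

theorem prefixProb_zero (q : HistPolicy N) (ht : 0 ≤ N.T) :
    p.prefixProb x0 0 ht = q.prefixProb x0 0 ht := by
  funext xs as
  simp [prefixProb]

theorem prefixProb_succ (t : ℕ) (ht : t < N.T) (xs : Fin (t + 2) → X) (as : Fin (t + 1) → A) :
    p.prefixProb x0 (t + 1) ht xs as =
      p.prefixProb x0 t ht.le (Fin.init xs) (Fin.init as) *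
        (p.π ⟨t, ht⟩ (Fin.init xs) (Fin.init as) (as (Fin.last t)) *
          N.P (xs (Fin.last t).castSucc) (as (Fin.last t)) (xs (Fin.last (t + 1)))) := by
  rw [prefixProb, Fin.prod_univ_castSucc, ← mul_assoc]
  rfl

theorem prefixExpect_nonneg (t : ℕ) (ht : t ≤ N.T) {F : (Fin (t + 1) → X) → (Fin t → A) → ℝ}
    (hF : ∀ xs as, 0 ≤ F xs as) : 0 ≤ p.prefixExpect x0 t ht F :=
  Finset.sum_nonneg fun _ _ => Finset.sum_nonneg fun _ _ =>
    mul_nonneg (p.prefixProb_nonneg ..) (hF ..)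

theorem prefixExpect_mul_const (t : ℕ) (ht : t ≤ N.T) (F : (Fin (t + 1) → X) → (Fin t → A) → ℝ)
    (c : ℝ) : p.prefixExpect x0 t ht F * c = p.prefixExpect x0 t ht fun xs as => F xs as * c := by
  simp only [prefixExpect, Finset.sum_mul, mul_assoc]

theorem sum_prefixExpect {ι : Type*} (s : Finset ι) (t : ℕ) (ht : t ≤ N.T)
    (F : ι → (Fin (t + 1) → X) → (Fin t → A) → ℝ) :
    ∑ i ∈ s, p.prefixExpect x0 t ht (F i) =
      p.prefixExpect x0 t ht fun xs as => ∑ i ∈ s, F i xs as := by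
  simp only [prefixExpect, Finset.mul_sum]
  rw [Finset.sum_comm]
  exact Finset.sum_congr rfl fun _ _ => Finset.sum_comm

theorem prefixExpect_succ (t : ℕ) (ht : t < N.T)
    (G : (Fin (t + 1) → X) → (Fin t → A) → A → X → ℝ) :
    p.prefixExpect x0 (t + 1) ht
        (fun xs as => G (Fin.init xs) (Fin.init as) (as (Fin.last t)) (xs (Fin.last (t + 1)))) =
      p.prefixExpect x0 t ht.le fun xs as =>
        ∑ a, p.π ⟨t, ht⟩ xs as a * ∑ x', N.P (xs (Fin.last t)) a x' * G xs as a x' := by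
  rw [prefixExpect, Fin.sum_pi_snoc]
  refine Finset.sum_congr rfl fun xs _ => ?_
  rw [Finset.sum_comm, Fin.sum_pi_snoc]
  refine Finset.sum_congr rfl fun as _ => ?_
  simp only [prefixProb_succ, Fin.init_snoc, Fin.snoc_last, Fin.snoc_castSucc, Finset.mul_sum]
  exact Finset.sum_congr rfl fun _ _ => Finset.sum_congr rfl fun _ _ => by ring

theorem prefixExpect_succ_init (t : ℕ) (ht : t < N.T) (F : (Fin (t + 1) → X) → (Fin t → A) → ℝ) :
    p.prefixExpect x0 (t + 1) ht (fun xs as => F (Fin.init xs) (Fin.init as)) =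
      p.prefixExpect x0 t ht.le F := by
  simpa [← Finset.sum_mul, ← Finset.mul_sum, N.P_sum, p.sum_one] using
    p.prefixExpect_succ x0 t ht fun xs as _ _ => F xs as

theorem prefixExpect_take {t s : ℕ} (hts : t ≤ s) (hs : s ≤ N.T)
    (F : (Fin (t + 1) → X) → (Fin t → A) → ℝ) :
    p.prefixExpect x0 s hs (fun xs as => F (Fin.take (t + 1) (by omega) xs) (Fin.take t hts as)) =
      p.prefixExpect x0 t (hts.trans hs) F := by
  induction s, hts using Nat.le_induction with
  | base => simp only [Fin.take_eq_self]
  | succ s hts ih => exact (p.prefixExpect_succ_init x0 s hs _).trans (ih _)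

theorem sum_trajProb_mul_take (t : ℕ) (ht : t ≤ N.T) (F : (Fin (t + 1) → X) → (Fin t → A) → ℝ) :
    ∑ τ : Traj N, trajProb N p x0 τ * F (Fin.take (t + 1) (by omega) τ.1) (Fin.take t ht τ.2) =
      p.prefixExpect x0 t ht F := by
  rw [Fintype.sum_prod_type, ← p.prefixExpect_take x0 ht le_rfl]
  rfl

def stateDist (t : ℕ) (ht : t ≤ N.T) (x : X) : ℝ :=
  p.prefixExpect x0 t ht fun xs _ => if xs (Fin.last t) = x then 1 else 0

def stateActionDist (t : ℕ) (ht : t < N.T) (x : X) (a : A) : ℝ :=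
  p.prefixExpect x0 t ht.le fun xs as => if xs (Fin.last t) = x then p.π ⟨t, ht⟩ xs as a else 0

theorem stateDist_zero (q : HistPolicy N) (ht : 0 ≤ N.T) :
    p.stateDist x0 0 ht = q.stateDist x0 0 ht := by
  funext x
  simp only [stateDist, prefixExpect, p.prefixProb_zero x0 q]

theorem stateDist_nonneg (t : ℕ) (ht : t ≤ N.T) (x : X) : 0 ≤ p.stateDist x0 t ht x :=
  p.prefixExpect_nonneg x0 t ht fun _ _ => by split_ifs <;> norm_num

theorem stateActionDist_nonneg (t : ℕ) (ht : t < N.T) (x : X) (a : A) :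
    0 ≤ p.stateActionDist x0 t ht x a :=
  p.prefixExpect_nonneg x0 t _ fun _ _ => by split_ifs; exacts [p.nonneg .., le_rfl]

theorem sum_stateActionDist (t : ℕ) (ht : t < N.T) (x : X) :
    ∑ a, p.stateActionDist x0 t ht x a = p.stateDist x0 t ht.le x := by
  simp only [stateActionDist, sum_prefixExpect, stateDist]
  congr
  funext xs as
  split_ifs <;> simp [p.sum_one]

theorem stateDist_succ (t : ℕ) (ht : t < N.T) (x' : X) :
    p.stateDist x0 (t + 1) ht x' = ∑ x, ∑ a, p.stateActionDist x0 t ht x a * N.P x a x' := by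
  simp only [stateActionDist, prefixExpect_mul_const, sum_prefixExpect]
  refine (p.prefixExpect_succ x0 t ht fun _ _ _ y => if y = x' then 1 else 0).trans ?_
  congr
  funext xs as
  rw [Finset.sum_comm]
  simp [ite_mul]

theorem sum_trajProb_mul_stateAction (t : Fin N.T) (f : X → A → ℝ) :
    ∑ τ : Traj N, trajProb N p x0 τ * f (τ.1 t.castSucc) (τ.2 t) =
      ∑ x, ∑ a, p.stateActionDist x0 t t.isLt x a * f x a := by
  refine (p.sum_trajProb_mul_take x0 (t + 1) t.isLt fun xs as =>
    f (Fin.init xs (Fin.last t)) (as (Fin.last t))).trans ?_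
  refine (p.prefixExpect_succ x0 t t.isLt fun xs _ a _ => f (xs (Fin.last t)) a).trans ?_
  simp only [stateActionDist, prefixExpect_mul_const, sum_prefixExpect]
  congr
  funext xs as
  rw [Finset.sum_comm]
  simp [ite_mul, ← Finset.sum_mul, N.P_sum]

theorem sum_trajProb_mul_lastState (g : X → ℝ) :
    ∑ τ : Traj N, trajProb N p x0 τ * g (τ.1 (Fin.last N.T)) =
      ∑ x, p.stateDist x0 N.T le_rfl x * g x := by
  refine (p.sum_trajProb_mul_take x0 N.T le_rfl fun xs _ => g (xs (Fin.last N.T))).trans ?_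
  simp only [stateDist, prefixExpect_mul_const, sum_prefixExpect]
  simp [ite_mul]

theorem J_eq_sum_dist :
    J N p x0 = ∑ t : Fin N.T, ∑ x, ∑ a, p.stateActionDist x0 t t.isLt x a * N.r t x a +
      ∑ x, p.stateDist x0 N.T le_rfl x * N.rT x := by
  simp only [J, mul_add, Finset.mul_sum, Finset.sum_add_distrib, ← sum_trajProb_mul_lastState,
    ← sum_trajProb_mul_stateAction]
  rw [Finset.sum_comm]

theorem probEvent_lastState (E : X → Prop) :
    probEvent N p x0 (fun τ => E (τ.1 (Fin.last N.T))) =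
      ∑ x, p.stateDist x0 N.T le_rfl x * if E x then 1 else 0 := by
  rw [← sum_trajProb_mul_lastState]
  simp only [probEvent, mul_boole]

/-- The conditional law of `A_t` given `X_t = x` under `p`; at states that are unreachable at
time `t` any law on actions will do. -/
def markovKernel (t : ℕ) (ht : t < N.T) (x : X) (a : A) : ℝ :=
  if p.stateDist x0 t ht.le x = 0 then (Fintype.card A : ℝ)⁻¹
  else p.stateActionDist x0 t ht x a / p.stateDist x0 t ht.le x

theorem stateDist_mul_markovKernel (t : ℕ) (ht : t < N.T) (x : X) (a : A) :
    p.stateDist x0 t ht.le x * p.markovKernel x0 t ht x a = p.stateActionDist x0 t ht x a := by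
  unfold markovKernel
  split_ifs with h
  · have hsum : ∑ a, p.stateActionDist x0 t ht x a = 0 := by rw [sum_stateActionDist, h]
    rw [h, zero_mul, (Finset.sum_eq_zero_iff_of_nonneg fun a _ =>
      p.stateActionDist_nonneg x0 t ht x a).mp hsum a (Finset.mem_univ a)]
  · exact mul_div_cancel₀ _ h

section Markovization

variable [Nonempty A]

theorem markovKernel_nonneg (t : ℕ) (ht : t < N.T) (x : X) (a : A) :
    0 ≤ p.markovKernel x0 t ht x a := by
  unfold markovKernel
  split_ifs
  · positivity
  · exact div_nonneg (p.stateActionDist_nonneg ..) (p.stateDist_nonneg ..)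

theorem sum_markovKernel (t : ℕ) (ht : t < N.T) (x : X) :
    ∑ a, p.markovKernel x0 t ht x a = 1 := by
  unfold markovKernel
  split_ifs with h
  · simp
  · rw [← Finset.sum_div, sum_stateActionDist, div_self h]

def markovization : HistPolicy N where
  π t xs _ a := p.markovKernel x0 t t.isLt (xs (Fin.last t)) a
  nonneg t xs _ a := p.markovKernel_nonneg x0 t t.isLt (xs (Fin.last t)) a
  sum_one t xs _ := p.sum_markovKernel x0 t t.isLt (xs (Fin.last t))

theorem isMarkov_markovization : IsMarkov (p.markovization x0) := by
  intro t xs xs' _ _ h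
  simp only [markovization, h]

theorem stateActionDist_markovization_eq_mul (t : ℕ) (ht : t < N.T) (x : X) (a : A) :
    (p.markovization x0).stateActionDist x0 t ht x a =
      (p.markovization x0).stateDist x0 t ht.le x * p.markovKernel x0 t ht x a := by
  simp only [stateActionDist, stateDist, prefixExpect_mul_const]
  congr
  funext xs as
  split_ifs with h
  · simp [markovization, h]
  · simp

theorem stateDist_markovization (t : ℕ) (ht : t ≤ N.T) :
    (p.markovization x0).stateDist x0 t ht = p.stateDist x0 t ht := by
  induction t with
  | zero => exact stateDist_zero ..
  | succ t ih =>
    funext x'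
    simp only [stateDist_succ, stateActionDist_markovization_eq_mul, ih, stateDist_mul_markovKernel]

theorem stateActionDist_markovization (t : ℕ) (ht : t < N.T) :
    (p.markovization x0).stateActionDist x0 t ht = p.stateActionDist x0 t ht := by
  funext x a
  rw [stateActionDist_markovization_eq_mul, stateDist_markovization, stateDist_mul_markovKernel]

theorem J_markovization : J N (p.markovization x0) x0 = J N p x0 := by
  simp only [J_eq_sum_dist, stateActionDist_markovization, stateDist_markovization]

theorem probEvent_lastState_markovization (E : X → Prop) :
    probEvent N (p.markovization x0) x0 (fun τ => E (τ.1 (Fin.last N.T))) =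
      probEvent N p x0 (fun τ => E (τ.1 (Fin.last N.T))) := by
  simp only [probEvent_lastState, stateDist_markovization]

end Markovization

end HistPolicy

namespace MDP

variable (M : MDP X A)

def alarmCount {n : ℕ} (xs : Fin (n + 1) → X) : Fin (n + 1) → Fin (M.T + 1) :=
  Fin.induction 0 fun i c => ⟨min (c.val + if xs i.succ ∈ M.Xa then 1 else 0) M.T, by omega⟩

theorem alarmCount_zero {n : ℕ} (xs : Fin (n + 1) → X) : M.alarmCount xs 0 = 0 := rfl

theorem alarmCount_succ {n : ℕ} (xs : Fin (n + 1) → X) (i : Fin n) :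
    M.alarmCount xs i.succ =
      ⟨min ((M.alarmCount xs i.castSucc).val + if xs i.succ ∈ M.Xa then 1 else 0) M.T,
        by omega⟩ :=
  Fin.induction_succ ..

theorem val_alarmCount_succ {n : ℕ} (xs : Fin (n + 1) → X) (i : Fin n) :
    (M.alarmCount xs i.succ).val =
      min ((M.alarmCount xs i.castSucc).val + if xs i.succ ∈ M.Xa then 1 else 0) M.T := by
  rw [alarmCount_succ]

theorem alarmCount_le {n : ℕ} (xs : Fin (n + 1) → X) (i : Fin (n + 1)) :
    (M.alarmCount xs i).val ≤ i := by
  induction i using Fin.induction with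
  | zero => simp [alarmCount_zero]
  | succ i ih =>
    rw [val_alarmCount_succ]
    simp only [Fin.val_castSucc, Fin.val_succ] at ih ⊢
    split_ifs <;> omega

theorem alarmCount_take {m n : ℕ} (h : m + 1 ≤ n + 1) (xs : Fin (n + 1) → X) (i : Fin (m + 1)) :
    M.alarmCount (Fin.take (m + 1) h xs) i = M.alarmCount xs (Fin.castLE h i) := by
  induction i using Fin.induction with
  | zero => rfl
  | succ i ih =>
    have hi : Fin.castLE h i.succ = (Fin.castLE (by omega) i : Fin n).succ := rfl
    apply Fin.ext
    rw [val_alarmCount_succ, ih, hi, val_alarmCount_succ]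
    rfl

theorem alarmCount_last {n : ℕ} (hn : n ≤ M.T) (xs : Fin (n + 1) → X) (h0 : xs 0 ∉ M.Xa) :
    (M.alarmCount xs (Fin.last n)).val = (Finset.univ.filter fun i => xs i ∈ M.Xa).card := by
  induction n with
  | zero => simp [alarmCount_zero, Finset.filter_singleton, h0]
  | succ n ih =>
    have hinit := ih (by omega) (Fin.init xs) h0
    have hle := M.alarmCount_le (Fin.init xs) (Fin.last n)
    have hcast : M.alarmCount xs (Fin.last n).castSucc = M.alarmCount (Fin.init xs) (Fin.last n) :=
      (M.alarmCount_take (by omega) xs (Fin.last n)).symm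
    rw [← Fin.succ_last, val_alarmCount_succ, hcast, Finset.card_filter, Fin.sum_univ_castSucc]
    rw [Finset.card_filter] at hinit
    generalize M.alarmCount (Fin.init xs) (Fin.last n) = c at hinit hle ⊢
    simp only [Fin.init, Fin.val_last, Fin.succ_last] at hinit hle ⊢
    rw [min_eq_left (by split_ifs <;> omega), hinit]
    rfl

def augTraj (τ : Traj M) : Traj (countAug M) :=
  (fun i => (τ.1 i, M.alarmCount τ.1 i), τ.2)

theorem augTraj_injective : Function.Injective M.augTraj := fun _ _ h =>
  Prod.ext (funext fun i => congrArg (fun σ : Traj (countAug M) => (σ.1 i).1) h)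
    (congrArg (fun σ : Traj (countAug M) => σ.2) h)

theorem trajProb_augTraj (q : HistPolicy (countAug M)) (p : HistPolicy M) (x0 : X) (τ : Traj M)
    (hqp : ∀ t, q.π t (histStates (M.augTraj τ) t) (histActs τ t) =
      p.π t (histStates τ t) (histActs τ t)) :
    trajProb (countAug M) q (x0, 0) (M.augTraj τ) = trajProb M p x0 τ := by
  unfold trajProb
  congr 1
  · have h0 : (M.augTraj τ).1 0 = (x0, 0) ↔ τ.1 0 = x0 :=
      Prod.ext_iff.trans (and_iff_left (M.alarmCount_zero τ.1))
    simp only [h0]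
  · refine Finset.prod_congr rfl fun t _ => ?_
    rw [← hqp t]
    exact congrArg _ (if_pos (M.alarmCount_succ τ.1 t))

theorem trajProb_countAug_eq_zero (q : HistPolicy (countAug M)) (x0 : X)
    {σ : Traj (countAug M)} (hσ : σ ∉ Set.range M.augTraj) :
    trajProb (countAug M) q (x0, 0) σ = 0 := by
  by_contra hne
  obtain ⟨hinit, hsteps⟩ := mul_ne_zero_iff.mp hne
  have h0 : σ.1 0 = (x0, 0) := by
    by_contra h
    exact hinit (if_neg h)
  have hstep (t : Fin M.T) : (σ.1 t.succ).2.val =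
      min ((σ.1 t.castSucc).2.val + if (σ.1 t.succ).1 ∈ M.Xa then 1 else 0) M.T := by
    by_contra h
    exact (mul_ne_zero_iff.mp (Finset.prod_ne_zero_iff.mp hsteps t (Finset.mem_univ t))).2
      (if_neg fun h' => h (congrArg Fin.val h'))
  have hcount (i : Fin (M.T + 1)) : (σ.1 i).2 = M.alarmCount (fun j => (σ.1 j).1) i := by
    induction i using Fin.induction with
    | zero => exact congrArg Prod.snd h0
    | succ t ih =>
      refine Fin.ext <| (hstep t).trans ?_
      rw [ih]
      exact (M.val_alarmCount_succ _ t).symm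
  exact hσ ⟨(fun i => (σ.1 i).1, σ.2), Prod.ext (funext fun i => Prod.ext rfl (hcount i).symm) rfl⟩

theorem sum_countAug_eq (Q : HistPolicy (countAug M)) (P : HistPolicy M) (x0 : X)
    (hQP : ∀ τ, trajProb (countAug M) Q (x0, 0) (M.augTraj τ) = trajProb M P x0 τ)
    (F : Traj (countAug M) → ℝ → ℝ) (hF : ∀ σ, F σ 0 = 0) :
    ∑ σ, F σ (trajProb (countAug M) Q (x0, 0) σ) = ∑ τ, F (M.augTraj τ) (trajProb M P x0 τ) :=
  (Fintype.sum_of_injective M.augTraj M.augTraj_injective _ _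
    (fun _ hσ => by rw [M.trajProb_countAug_eq_zero Q x0 hσ, hF]) fun τ => by rw [hQP]).symm

theorem probEvent_countAug (Q : HistPolicy (countAug M)) (P : HistPolicy M) (x0 : X)
    (hQP : ∀ τ, trajProb (countAug M) Q (x0, 0) (M.augTraj τ) = trajProb M P x0 τ)
    (E : Traj (countAug M) → Prop) :
    probEvent (countAug M) Q (x0, 0) E = probEvent M P x0 (fun τ => E (M.augTraj τ)) :=
  M.sum_countAug_eq Q P x0 hQP (fun σ w => if E σ then w else 0) fun _ => ite_self 0

theorem probEvent_alarmCount_le {x0 : X} (hx0 : x0 ∉ M.Xa) (Q : HistPolicy (countAug M))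
    (P : HistPolicy M)
    (hQP : ∀ τ, trajProb (countAug M) Q (x0, 0) (M.augTraj τ) = trajProb M P x0 τ) (i : ℕ) :
    probEvent (countAug M) Q (x0, 0) (fun σ => i ≤ (σ.1 (Fin.last (countAug M).T)).2.val) =
      probEvent M P x0 (fun τ => i ≤ (Finset.univ.filter fun t => τ.1 t ∈ M.Xa).card) := by
  rw [M.probEvent_countAug Q P x0 hQP, probEvent, probEvent]
  refine Finset.sum_congr rfl fun τ _ => ?_
  by_cases h : τ.1 0 = x0
  · rw [← M.alarmCount_last le_rfl τ.1 (h ▸ hx0)]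
    rfl
  · simp [trajProb, h]

theorem J_countAug_eq (Q : HistPolicy (countAug M)) (P : HistPolicy M) (x0 : X)
    (hQP : ∀ τ, trajProb (countAug M) Q (x0, 0) (M.augTraj τ) = trajProb M P x0 τ) :
    J (countAug M) Q (x0, 0) = J M P x0 :=
  M.sum_countAug_eq Q P x0 hQP (fun σ w => w * (∑ t, (countAug M).r t (σ.1 t.castSucc) (σ.2 t) +
    (countAug M).rT (σ.1 (Fin.last M.T)))) fun _ => zero_mul _

end MDP

namespace HistPolicy

variable {M : MDP X A}

def liftCountAug (p : HistPolicy M) : HistPolicy (countAug M) where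
  π t xs as := p.π t (fun i => (xs i).1) as
  nonneg t xs as := p.nonneg t (fun i => (xs i).1) as
  sum_one t xs as := p.sum_one t (fun i => (xs i).1) as

def ofCountAug (q : HistPolicy (countAug M)) : HistPolicy M where
  π t xs as := q.π t (fun i => (xs i, M.alarmCount xs i)) as
  nonneg t xs as := q.nonneg t (fun i => (xs i, M.alarmCount xs i)) as
  sum_one t xs as := q.sum_one t (fun i => (xs i, M.alarmCount xs i)) as

theorem trajProb_liftCountAug (p : HistPolicy M) (x0 : X) (τ : Traj M) :
    trajProb (countAug M) p.liftCountAug (x0, 0) (M.augTraj τ) = trajProb M p x0 τ :=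
  M.trajProb_augTraj _ p x0 τ fun _ => rfl

theorem trajProb_ofCountAug (q : HistPolicy (countAug M)) (x0 : X) (τ : Traj M) :
    trajProb (countAug M) q (x0, 0) (M.augTraj τ) = trajProb M q.ofCountAug x0 τ :=
  M.trajProb_augTraj q _ x0 τ fun t => congrArg (q.π t · _) <|
    funext fun i => Prod.ext rfl (M.alarmCount_take _ τ.1 i).symm

end HistPolicy

theorem impact_hist_eq_countAug_markov_general [Nonempty A]
    (M : MDP X A) (x0 : X) (hx0 : x0 ∉ M.Xa)
    (Δ : ℕ → ℝ) :
    sSup {v : ℝ | ∃ p : HistPolicy M,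
        (∀ i : ℕ, 1 ≤ i → i ≤ M.T →
          probEvent M p x0 (fun τ =>
            i ≤ (Finset.univ.filter fun t : Fin (M.T + 1) => τ.1 t ∈ M.Xa).card)
            ≤ Δ i) ∧
        v = J M p x0} =
    sSup {v : ℝ | ∃ q : HistPolicy (countAug M), IsMarkov q ∧
        (∀ i : ℕ, 1 ≤ i → i ≤ M.T →
          probEvent (countAug M) q (x0, 0)
            (fun σ => i ≤ ((σ.1 (Fin.last (countAug M).T)).2).val) ≤ Δ i) ∧
        v = J (countAug M) q (x0, 0)} := by
  congr 1
  ext v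
  constructor
  · rintro ⟨p, hp, rfl⟩
    have hlift := p.trajProb_liftCountAug x0
    refine ⟨p.liftCountAug.markovization (x0, 0), p.liftCountAug.isMarkov_markovization _,
      fun i hi hiT => ?_, ?_⟩
    · rw [p.liftCountAug.probEvent_lastState_markovization (x0, 0) fun s => i ≤ s.2.val,
        M.probEvent_alarmCount_le hx0 _ _ hlift]
      exact hp i hi hiT
    · rw [HistPolicy.J_markovization, M.J_countAug_eq _ _ x0 hlift]
  · rintro ⟨q, -, hq, rfl⟩
    have hof := q.trajProb_ofCountAug x0
    refine ⟨q.ofCountAug, fun i hi hiT => ?_, M.J_countAug_eq _ _ x0 hof⟩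
    rw [← M.probEvent_alarmCount_le hx0 _ _ hof]
    exact hq i hi hiT

/-- The optimal attack impact over history-dependent policies
under the multi-alarm chance constraints equals the optimal impact over Markov
policies of the counting augmented MDP under final-counter constraints. -/
theorem impact_hist_eq_countAug_markov [Nonempty X] [Nonempty A]
    (M : MDP X A) (x0 : X) (hx0 : x0 ∉ M.Xa)
    (Δ : ℕ → ℝ) (hΔ : ∀ i : ℕ, 1 ≤ i → i ≤ M.T → Δ i ∈ Set.Icc (0 : ℝ) 1) :
    sSup {v : ℝ | ∃ p : HistPolicy M,
        (∀ i : ℕ, 1 ≤ i → i ≤ M.T →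
          probEvent M p x0 (fun τ =>
            i ≤ (Finset.univ.filter fun t : Fin (M.T + 1) => τ.1 t ∈ M.Xa).card)
            ≤ Δ i) ∧
        v = J M p x0} =
    sSup {v : ℝ | ∃ q : HistPolicy (countAug M), IsMarkov q ∧
        (∀ i : ℕ, 1 ≤ i → i ≤ M.T →
          probEvent (countAug M) q (x0, 0)
            (fun σ => i ≤ ((σ.1 (Fin.last (countAug M).T)).2).val) ≤ Δ i) ∧
        v = J (countAug M) q (x0, 0)} :=
  impact_hist_eq_countAug_markov_general M x0 hx0 Δ

end
end

section
/- Let M be a finite MDP with alarm region and x_0 an initial state. For every history-dependent policy π̂ of the counting augmented MDP of M with initial state (x_0,0), there exists a history-dependent policy π of M with initial state x_0 such that the pushforward of the trajectory law P^π̂ under the projection ((x_0,y_0),…,(x_T,y_T), a_0,…,a_{T−1}) ↦ (x_0,…,x_T, a_0,…,a_{T−1}) equals the trajectory law P^π; in particular J_M(π) = Ĵ(π̂). -/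
/- Common framework: finite MDPs with alarm region, trajectories,
   history-dependent policies, trajectory laws, objectives. -/

attribute [local instance] Classical.propDecidable

noncomputable section

variable {X A : Type} [Fintype X] [Fintype A]

/-! The counter of the augmented MDP is a deterministic function of the state history: along
every trajectory of positive probability it is the saturated number `alarmCount` of visits to the
alarm region. A policy of the augmented MDP can therefore be run on `M` by recomputing the counter
from the history, and attaching the counter to trajectories of `M` is a probability-preserving
bijection onto the support of the augmented trajectory law. -/

def alarmCount {α : Type*} (S : Set α) (cap : ℕ) (xs : ℕ → α) : ℕ → ℕ
  | 0 => 0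
  | k + 1 => min (alarmCount S cap xs k + if xs (k + 1) ∈ S then 1 else 0) cap

section alarmCount

variable {α : Type*} (S : Set α) (cap : ℕ)

theorem alarmCount_le (xs : ℕ → α) : ∀ k, alarmCount S cap xs k ≤ cap
  | 0 => Nat.zero_le _
  | _ + 1 => min_le_right _ _

theorem alarmCount_congr {xs ys : ℕ → α} :
    ∀ k, (∀ j ≤ k, xs j = ys j) → alarmCount S cap xs k = alarmCount S cap ys k
  | 0, _ => rfl
  | k + 1, h => by
    simp only [alarmCount, alarmCount_congr k fun j hj => h j (by omega), h (k + 1) le_rfl]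

end alarmCount

namespace countAug

variable (M : MDP X A)

/-- As in `countAug`, the initial state does not count as an alarm. -/
def countStates {n : ℕ} (xs : Fin (n + 1) → X) (i : Fin (n + 1)) : X × Fin (M.T + 1) :=
  (xs i, ⟨alarmCount M.Xa M.T (fun k => xs (Fin.clamp k n)) i,
    Nat.lt_succ_of_le (alarmCount_le _ _ _ _)⟩)

theorem countStates_castLE {n m : ℕ} (h : n + 1 ≤ m + 1) (xs : Fin (m + 1) → X)
    (i : Fin (n + 1)) :
    countStates M (xs ∘ Fin.castLE h) i = countStates M xs (Fin.castLE h i) := by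
  refine Prod.ext rfl (Fin.ext (alarmCount_congr _ _ _ fun j hj => congrArg xs ?_))
  simp only [Fin.ext_iff, Fin.val_castLE, Fin.clamp]
  omega

theorem countStates_zero {n : ℕ} (xs : Fin (n + 1) → X) : countStates M xs 0 = (xs 0, 0) := rfl

theorem countStates_succ {n : ℕ} (xs : Fin (n + 1) → X) (i : Fin n) :
    ((countStates M xs i.succ).2 : ℕ) =
      min (((countStates M xs i.castSucc).2 : ℕ) + if xs i.succ ∈ M.Xa then 1 else 0) M.T := by
  have : Fin.clamp (i + 1) n = i.succ := Fin.ext (by simp [Fin.clamp])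
  simp [countStates, alarmCount, this]

theorem countStates_unique {n : ℕ} (ys : Fin (n + 1) → X × Fin (M.T + 1)) (h0 : (ys 0).2 = 0)
    (hsucc : ∀ i : Fin n, ((ys i.succ).2 : ℕ) =
      min (((ys i.castSucc).2 : ℕ) + if (ys i.succ).1 ∈ M.Xa then 1 else 0) M.T) :
    ys = countStates M (fun i => (ys i).1) := by
  funext i
  refine Prod.ext rfl (Fin.ext ?_)
  induction i using Fin.induction with
  | zero => rw [h0, countStates_zero]
  | succ i ih => rw [hsucc, countStates_succ, ih]

theorem P_eq_of_count {s s' : X × Fin (M.T + 1)} (a : A)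
    (h : (s'.2 : ℕ) = min ((s.2 : ℕ) + if s'.1 ∈ M.Xa then 1 else 0) M.T) :
    (countAug M).P s a s' = M.P s.1 a s'.1 :=
  if_pos (Fin.ext h)

theorem count_eq_of_P_ne_zero {s s' : X × Fin (M.T + 1)} {a : A}
    (h : (countAug M).P s a s' ≠ 0) :
    (s'.2 : ℕ) = min ((s.2 : ℕ) + if s'.1 ∈ M.Xa then 1 else 0) M.T := by
  by_contra hc
  exact h (if_neg fun he => hc (congrArg Fin.val he))

def liftTraj (τ : Traj M) : Traj (countAug M) := (countStates M τ.1, τ.2)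

def forgetCount (σ : Traj (countAug M)) : Traj M := (fun t => (σ.1 t).1, σ.2)

theorem forgetCount_liftTraj (τ : Traj M) : forgetCount M (liftTraj M τ) = τ := rfl

theorem liftTraj_injective : Function.Injective (liftTraj M) :=
  Function.LeftInverse.injective (forgetCount_liftTraj M)

theorem histStates_liftTraj (τ : Traj M) (t : Fin M.T) :
    histStates (liftTraj M τ) t = countStates M (histStates τ t) :=
  funext fun i => (countStates_castLE M _ τ.1 i).symm

def liftPolicy (q : HistPolicy (countAug M)) : HistPolicy M where
  π t xs := q.π t (countStates M xs)
  nonneg t xs := q.nonneg t (countStates M xs)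
  sum_one t xs := q.sum_one t (countStates M xs)

theorem trajProb_liftTraj (q : HistPolicy (countAug M)) (x0 : X) (τ : Traj M) :
    trajProb (countAug M) q (x0, 0) (liftTraj M τ) = trajProb M (liftPolicy M q) x0 τ := by
  unfold trajProb
  congr 1
  · rw [show (liftTraj M τ).1 0 = (τ.1 0, 0) from countStates_zero M τ.1]
    simp
  · exact Finset.prod_congr rfl fun t _ =>
      congrArg₂ (· * ·) (congrArg (q.π t · _ _) (histStates_liftTraj M τ t))
        (P_eq_of_count M _ (countStates_succ M τ.1 t))

theorem eq_liftTraj_of_trajProb_ne_zero (q : HistPolicy (countAug M)) (x0 : X)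
    {σ : Traj (countAug M)} (h : trajProb (countAug M) q (x0, 0) σ ≠ 0) :
    σ = liftTraj M (forgetCount M σ) := by
  obtain ⟨hinit, hsteps⟩ := mul_ne_zero_iff.mp h
  have h0 : σ.1 0 = (x0, 0) := by
    by_contra hc
    exact hinit (if_neg hc)
  refine Prod.ext (countStates_unique M σ.1 (by rw [h0]) fun t => ?_) rfl
  exact count_eq_of_P_ne_zero M
    (right_ne_zero_of_mul (Finset.prod_ne_zero_iff.mp hsteps t (Finset.mem_univ t)))

theorem sum_eq_sum_liftTraj (q : HistPolicy (countAug M)) (x0 : X) (g : Traj (countAug M) → ℝ)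
    (hg : ∀ σ, g σ ≠ 0 → trajProb (countAug M) q (x0, 0) σ ≠ 0) :
    ∑ σ, g σ = ∑ τ, g (liftTraj M τ) := by
  refine (Fintype.sum_of_injective _ (liftTraj_injective M) _ _ (fun σ hσ => ?_) fun _ => rfl).symm
  by_contra hne
  exact hσ ⟨_, (eq_liftTraj_of_trajProb_ne_zero M q x0 (hg σ hne)).symm⟩

end countAug

open countAug in
theorem countAug_pushforward_general
    (M : MDP X A) (x0 : X) (q : HistPolicy (countAug M)) :
    ∃ p : HistPolicy M,
      (∀ τ : Traj M,
        trajProb M p x0 τ =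
          ∑ σ : Traj (countAug M),
            if ((fun t => (σ.1 t).1, σ.2) : Traj M) = τ
            then trajProb (countAug M) q (x0, 0) σ else 0) ∧
      J M p x0 = J (countAug M) q (x0, 0) := by
  refine ⟨liftPolicy M q, fun τ => ?_, ?_⟩
  · rw [sum_eq_sum_liftTraj M q x0 _ fun σ hσ => (ite_ne_right_iff.mp hσ).2]
    change _ = ∑ τ', if forgetCount M (liftTraj M τ') = τ then _ else 0
    simp only [forgetCount_liftTraj, trajProb_liftTraj, Finset.sum_ite_eq', Finset.mem_univ,
      if_true]
  · unfold J
    rw [sum_eq_sum_liftTraj M q x0 _ fun σ hσ => left_ne_zero_of_mul hσ]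
    simp only [trajProb_liftTraj]
    rfl

/-- Any policy of the counting augmented MDP can be imitated
by a policy of the original MDP: the pushforward of the augmented trajectory
law under the projection forgetting the counter equals the original trajectory
law; in particular the objective values coincide. -/
theorem countAug_pushforward [Nonempty X] [Nonempty A]
    (M : MDP X A) (x0 : X) (q : HistPolicy (countAug M)) :
    ∃ p : HistPolicy M,
      (∀ τ : Traj M,
        trajProb M p x0 τ =
          ∑ σ : Traj (countAug M),
            if ((fun t => (σ.1 t).1, σ.2) : Traj M) = τ
            then trajProb (countAug M) q (x0, 0) σ else 0) ∧
      J M p x0 = J (countAug M) q (x0, 0) :=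
  countAug_pushforward_general M x0 q

end
end

section
/- There exists a finite MDP with alarm region M = (X, A, P, T, (r_t), X_a) with horizon T = 3, an initial state x_0 ∉ X_a, and Δ = 1/2 such that the supremum of J_M(π) over all Markov policies π satisfying P^π(∃ t ∈ {0,…,T}: X_t ∈ X_a) ≤ Δ equals 11/3, while the supremum of J_M(π) over all history-dependent policies π satisfying P^π(∃ t ∈ {0,…,T}: X_t ∈ X_a) ≤ Δ equals 4. In particular, Markov policies cannot in general achieve the optimal value of the optimal control problem with a temporally joint chance constraint. -/
/- Common framework: finite MDPs with alarm region, trajectories,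
   history-dependent policies, trajectory laws, objectives. -/

attribute [local instance] Classical.propDecidable

noncomputable section

variable {X A : Type} [Fintype X] [Fintype A]

/-!
Every trajectory passes through `x₂` at time 2, and the only decision that matters is the probability
`q x` of playing `a'` there given `X₁ = x`. The alarm fires with probability `1/4 + 3/8 · q x₁` and the
objective equals `1 + 3 · q x₁ + q x_{1a}`, so the constraint reads `q x₁ ≤ 2/3`. On the branch
`X₁ = x_{1a}` the alarm has already fired, so a history-dependent policy loses nothing by taking
`q x_{1a} = 1` and reaches `4`. A Markov policy sees only `x₂` at time 2, hence `q x₁ = q x_{1a}`, and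
its value is at most `1 + 4 · 2/3 = 11/3`.
-/

theorem Fin.sum_univ_pi_succ {α M : Type*} [Fintype α] [AddCommMonoid M] {n : ℕ}
    (f : (Fin (n + 1) → α) → M) :
    ∑ g, f g = ∑ a, ∑ g : Fin n → α, f (Matrix.vecCons a g) :=
  (Fintype.sum_equiv (Fin.consEquiv fun _ => α) _ _ fun _ => rfl).symm.trans
    (Fintype.sum_prod_type _)

theorem HistPolicy.π_one_eq {M : MDP X (Fin 2)} (p : HistPolicy M) (t : Fin M.T)
    (xs : Fin (t.val + 1) → X) (as : Fin t.val → Fin 2) :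
    p.π t xs as 1 = 1 - p.π t xs as 0 := by
  linarith [p.sum_one t xs as, Fin.sum_univ_two (p.π t xs as)]

def HistPolicy.bernoulli {M : MDP X (Fin 2)}
    (ρ : (t : Fin M.T) → (Fin (t.val + 1) → X) → (Fin t.val → Fin 2) → ℝ)
    (hρ : ∀ t xs as, ρ t xs as ∈ Set.Icc (0 : ℝ) 1) : HistPolicy M where
  π t xs as a := if a = 1 then ρ t xs as else 1 - ρ t xs as
  nonneg t xs as a := by
    obtain ⟨h₀, h₁⟩ := hρ t xs as
    split_ifs <;> linarith
  sum_one t xs as := by simp [Fin.sum_univ_two]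

namespace MarkovGap

/-- States `0, …, 6` are `x₀, x₁, x_{1a}, x₂, x₃, x₃', x_{3a}'`, actions `0, 1` are `a, a'`; the
terminal states are made absorbing so that every row is a probability vector. -/
def kernel : Fin 7 → Fin 2 → Fin 7 → ℝ :=
  ![fun _ => ![0, 3/4, 1/4, 0, 0, 0, 0],
    fun _ => ![0, 0, 0, 1, 0, 0, 0],
    fun _ => ![0, 0, 0, 1, 0, 0, 0],
    ![![0, 0, 0, 0, 1, 0, 0], ![0, 0, 0, 0, 0, 1/2, 1/2]],
    fun _ => ![0, 0, 0, 0, 1, 0, 0],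
    fun _ => ![0, 0, 0, 0, 0, 1, 0],
    fun _ => ![0, 0, 0, 0, 0, 0, 1]]

def witness : MDP (Fin 7) (Fin 2) where
  T := 3
  hT := by norm_num
  P := kernel
  P_nonneg x a y := by
    fin_cases x <;> fin_cases a <;> fin_cases y <;> norm_num [kernel]
  P_sum x a := by
    fin_cases x <;> fin_cases a <;> norm_num [kernel, Fin.sum_univ_succ]
  r _ _ _ := 0
  rT := ![0, 0, 0, 0, 1, 10, 0]
  Xa := {2, 6}

theorem kernel_support {x y : Fin 7} {a : Fin 2} (h : kernel x a y ≠ 0) :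
    (x = 0 → y = 1 ∨ y = 2) ∧ (x = 1 ∨ x = 2 → y = 3) ∧ (x = 3 → y = 4 ∨ y = 5 ∨ y = 6) := by
  revert h; fin_cases x <;> fin_cases a <;> fin_cases y <;> simp [kernel]

theorem trajProb_witness (p : HistPolicy witness) (s : Fin 4 → Fin 7) (a : Fin 3 → Fin 2) :
    trajProb witness p 0 (s, a) =
      (if s 0 = 0 then 1 else 0) *
        (p.π (0 : Fin 3) ![s 0] ![] (a 0) * kernel (s 0) (a 0) (s 1)) *
        (p.π (1 : Fin 3) ![s 0, s 1] ![a 0] (a 1) * kernel (s 1) (a 1) (s 2)) *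
        (p.π (2 : Fin 3) ![s 0, s 1, s 2] ![a 0, a 1] (a 2) * kernel (s 2) (a 2) (s 3)) := by
  rw [trajProb]
  erw [Fin.prod_univ_three]
  simp only [mul_assoc]
  congr <;> funext i <;> fin_cases i <;> rfl

def reachablePaths : Finset (Fin 4 → Fin 7) :=
  {![0, 1, 3, 4], ![0, 1, 3, 5], ![0, 1, 3, 6], ![0, 2, 3, 4], ![0, 2, 3, 5], ![0, 2, 3, 6]}

theorem mem_reachablePaths_of_trajProb_ne_zero {p : HistPolicy witness} {s : Fin 4 → Fin 7}
    {a : Fin 3 → Fin 2} (h : trajProb witness p 0 (s, a) ≠ 0) : s ∈ reachablePaths := by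
  rw [trajProb_witness] at h
  simp only [mul_ne_zero_iff, ne_eq, ite_eq_right_iff, one_ne_zero, imp_false, not_not] at h
  obtain ⟨⟨⟨h₀, -, h₁⟩, -, h₂⟩, -, h₃⟩ := h
  have hs₁ : s 1 = 1 ∨ s 1 = 2 := (kernel_support h₁).1 h₀
  have hs₂ : s 2 = 3 := (kernel_support h₂).2.1 hs₁
  have hs₃ : s 3 = 4 ∨ s 3 = 5 ∨ s 3 = 6 := (kernel_support h₃).2.2 hs₂
  rw [show s = ![s 0, s 1, s 2, s 3] by funext i; fin_cases i <;> rfl]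
  rcases hs₁ with hs₁ | hs₁ <;> rcases hs₃ with hs₃ | hs₃ | hs₃ <;>
    simp [reachablePaths, h₀, hs₁, hs₂, hs₃]

theorem sum_trajProb_mul_eq_sum_reachablePaths (p : HistPolicy witness) (w : (Fin 4 → Fin 7) → ℝ) :
    ∑ τ : Traj witness, trajProb witness p 0 τ * w τ.1 =
      ∑ s ∈ reachablePaths, ∑ b₀, ∑ b₁, ∑ b₂, trajProb witness p 0 (s, ![b₀, b₁, b₂]) * w s := by
  have hacts (s : Fin 4 → Fin 7) :
      ∑ b₀, ∑ b₁, ∑ b₂, trajProb witness p 0 (s, ![b₀, b₁, b₂]) * w s =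
        ∑ a : Fin 3 → Fin 2, trajProb witness p 0 (s, a) * w s := by
    simp only [Fin.sum_univ_pi_succ, Fintype.sum_unique]
    rfl
  simp_rw [hacts, ← Finset.sum_product']
  refine (Finset.sum_subset (Finset.subset_univ _) ?_).symm
  rintro ⟨s, a⟩ - hsa
  rw [mul_eq_zero]
  by_contra! h
  exact hsa (Finset.mem_product.2 ⟨mem_reachablePaths_of_trajProb_ne_zero h.1, Finset.mem_univ a⟩)

/- `simp` cannot instantiate the dependent history arguments of `HistPolicy.π_one_eq` at numeral
times, so the instances needed below are stated separately. -/
theorem π_one_eq_time_zero (p : HistPolicy witness) :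
    p.π (0 : Fin 3) ![0] ![] 1 = 1 - p.π (0 : Fin 3) ![0] ![] 0 :=
  HistPolicy.π_one_eq p _ _ _

theorem π_one_eq_time_one (p : HistPolicy witness) (x : Fin 7) (b₀ : Fin 2) :
    p.π (1 : Fin 3) ![0, x] ![b₀] 1 = 1 - p.π (1 : Fin 3) ![0, x] ![b₀] 0 :=
  HistPolicy.π_one_eq p _ _ _

theorem π_zero_eq_time_two (p : HistPolicy witness) (x : Fin 7) (b₀ b₁ : Fin 2) :
    p.π (2 : Fin 3) ![0, x, 3] ![b₀, b₁] 0 = 1 - p.π (2 : Fin 3) ![0, x, 3] ![b₀, b₁] 1 := by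
  linarith [HistPolicy.π_one_eq p (2 : Fin 3) ![0, x, 3] ![b₀, b₁]]

/-- The conditional probability that `p` plays `a'` at time 2, given `X₁ = x`. -/
def riskProb (p : HistPolicy witness) (x : Fin 7) : ℝ :=
  ∑ b₀, ∑ b₁, p.π (0 : Fin 3) ![0] ![] b₀ * p.π (1 : Fin 3) ![0, x] ![b₀] b₁ *
    p.π (2 : Fin 3) ![0, x, 3] ![b₀, b₁] 1

theorem sum_trajProb_mul_eq (p : HistPolicy witness) (w : (Fin 4 → Fin 7) → ℝ) :
    ∑ τ : Traj witness, trajProb witness p 0 τ * w τ.1 =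
      3 / 4 * ((1 - riskProb p 1) * w ![0, 1, 3, 4] +
          riskProb p 1 * (w ![0, 1, 3, 5] + w ![0, 1, 3, 6]) / 2) +
        1 / 4 * ((1 - riskProb p 2) * w ![0, 2, 3, 4] +
          riskProb p 2 * (w ![0, 2, 3, 5] + w ![0, 2, 3, 6]) / 2) := by
  rw [sum_trajProb_mul_eq_sum_reachablePaths]
  simp only [reachablePaths, Finset.mem_insert, Finset.mem_singleton, Matrix.vecCons_inj, Fin.reduceEq,
    and_false, false_and, or_self, not_false_eq_true, Finset.sum_insert, Finset.sum_singleton,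
    Fin.sum_univ_two, trajProb_witness, kernel, Matrix.cons_val, ↓reduceIte, one_mul, mul_one]
  simp only [riskProb, Fin.sum_univ_two, π_one_eq_time_zero, π_one_eq_time_one, π_zero_eq_time_two]
  ring

theorem probEvent_alarm_eq (p : HistPolicy witness) :
    probEvent witness p 0 (fun τ => ∃ t, τ.1 t ∈ witness.Xa) = 1 / 4 + 3 / 8 * riskProb p 1 := by
  calc probEvent witness p 0 (fun τ => ∃ t, τ.1 t ∈ witness.Xa)
      = ∑ τ : Traj witness, trajProb witness p 0 τ *
          (fun s : Fin 4 → Fin 7 => if ∃ t, s t ∈ witness.Xa then 1 else 0) τ.1 :=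
        Finset.sum_congr rfl fun τ _ => by simp only [mul_boole]; congr
    _ = _ := sum_trajProb_mul_eq p fun s => if ∃ t, s t ∈ witness.Xa then 1 else 0
    _ = 1 / 4 + 3 / 8 * riskProb p 1 := by
        simp only [Fin.isValue, witness, Set.mem_insert_iff, Set.mem_singleton_iff, Fin.exists_fin_succ,
          Matrix.cons_val_zero, Fin.reduceEq, or_self, Matrix.cons_val_succ, Matrix.cons_val_fin_one,
          exists_const, ↓reduceIte, mul_zero, or_true, zero_add, mul_one, one_div, or_false]
        ring

theorem J_witness_eq (p : HistPolicy witness) : J witness p 0 = 1 + 3 * riskProb p 1 + riskProb p 2 := by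
  calc J witness p 0
      = ∑ τ : Traj witness, trajProb witness p 0 τ *
          (fun s : Fin 4 → Fin 7 => witness.rT (s 3)) τ.1 := by
        simp [J, witness]
    _ = _ := sum_trajProb_mul_eq p fun s => witness.rT (s 3)
    _ = 1 + 3 * riskProb p 1 + riskProb p 2 := by
        simp only [witness, Matrix.cons_val, mul_one, add_zero, one_div]
        ring

theorem riskProb_le_one (p : HistPolicy witness) (x : Fin 7) : riskProb p x ≤ 1 := by
  have h : 1 - riskProb p x = ∑ b₀, ∑ b₁, p.π (0 : Fin 3) ![0] ![] b₀ *
      p.π (1 : Fin 3) ![0, x] ![b₀] b₁ * p.π (2 : Fin 3) ![0, x, 3] ![b₀, b₁] 0 := by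
    simp only [riskProb, Fin.sum_univ_two, π_one_eq_time_zero, π_one_eq_time_one, π_zero_eq_time_two]
    ring
  have h' : 0 ≤ 1 - riskProb p x := h ▸ Finset.sum_nonneg fun _ _ => Finset.sum_nonneg fun _ _ =>
    mul_nonneg (mul_nonneg (p.nonneg _ _ _ _) (p.nonneg _ _ _ _)) (p.nonneg _ _ _ _)
  linarith

theorem riskProb_eq_of_forall {p : HistPolicy witness} {x : Fin 7} {c : ℝ}
    (h : ∀ b₀ b₁, p.π (2 : Fin 3) ![0, x, 3] ![b₀, b₁] 1 = c) : riskProb p x = c := by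
  simp only [riskProb, h, Fin.sum_univ_two, π_one_eq_time_zero, π_one_eq_time_one]
  ring

theorem riskProb_one_eq_two_of_isMarkov {p : HistPolicy witness} (hp : IsMarkov p) :
    riskProb p 1 = riskProb p 2 := by
  have h (x : Fin 7) : riskProb p x = p.π (2 : Fin 3) ![0, 1, 3] ![0, 0] 1 :=
    riskProb_eq_of_forall fun _ _ => congrFun (hp (2 : Fin 3) ![0, x, 3] ![0, 1, 3] _ _ rfl) 1
  rw [h 1, h 2]

def markovPolicy : HistPolicy witness :=
  HistPolicy.bernoulli (fun _ _ _ => 2 / 3) fun _ _ _ => by norm_num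

def historyPolicy : HistPolicy witness :=
  HistPolicy.bernoulli (fun _ xs _ => if ∃ i, xs i ∈ witness.Xa then 1 else 2 / 3)
    fun _ _ _ => by split_ifs <;> norm_num

theorem markovPolicy_isMarkov : IsMarkov markovPolicy := fun _ _ _ _ _ _ => rfl

theorem riskProb_markovPolicy (x : Fin 7) : riskProb markovPolicy x = 2 / 3 :=
  riskProb_eq_of_forall fun _ _ => rfl

theorem riskProb_historyPolicy_one : riskProb historyPolicy 1 = 2 / 3 :=
  riskProb_eq_of_forall fun _ _ => by
    simp [historyPolicy, HistPolicy.bernoulli, witness, Fin.exists_fin_succ]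

theorem riskProb_historyPolicy_two : riskProb historyPolicy 2 = 1 :=
  riskProb_eq_of_forall fun _ _ => by
    simp [historyPolicy, HistPolicy.bernoulli, witness, Fin.exists_fin_succ]

theorem isGreatest_markov_values :
    IsGreatest {v : ℝ | ∃ p : HistPolicy witness, IsMarkov p ∧
      probEvent witness p 0 (fun τ => ∃ t, τ.1 t ∈ witness.Xa) ≤ 1 / 2 ∧ v = J witness p 0}
      (11 / 3) := by
  refine ⟨⟨markovPolicy, markovPolicy_isMarkov, ?_, ?_⟩, ?_⟩
  · rw [probEvent_alarm_eq, riskProb_markovPolicy]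
    norm_num
  · rw [J_witness_eq, riskProb_markovPolicy, riskProb_markovPolicy]
    norm_num
  · rintro _ ⟨p, hp, h, hv⟩
    rw [probEvent_alarm_eq] at h
    rw [hv, J_witness_eq, ← riskProb_one_eq_two_of_isMarkov hp]
    linarith

theorem isGreatest_history_values :
    IsGreatest {v : ℝ | ∃ p : HistPolicy witness,
      probEvent witness p 0 (fun τ => ∃ t, τ.1 t ∈ witness.Xa) ≤ 1 / 2 ∧ v = J witness p 0} 4 := by
  refine ⟨⟨historyPolicy, ?_, ?_⟩, ?_⟩
  · rw [probEvent_alarm_eq, riskProb_historyPolicy_one]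
    norm_num
  · rw [J_witness_eq, riskProb_historyPolicy_one, riskProb_historyPolicy_two]
    norm_num
  · rintro _ ⟨p, h, hv⟩
    rw [probEvent_alarm_eq] at h
    rw [hv, J_witness_eq]
    linarith [riskProb_le_one p 2]

end MarkovGap

/-- There is a finite MDP with alarm region, horizon `T = 3`,
a non-alarming initial state and `Δ = 1/2` for which the optimal value over
Markov policies under the joint chance constraint is `11/3` while the optimal
value over history-dependent policies is `4`. -/
theorem markov_strictly_suboptimal_example :
    ∃ (n m : ℕ) (_ : 0 < n) (_ : 0 < m) (M : MDP (Fin n) (Fin m)) (x0 : Fin n),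
      M.T = 3 ∧ x0 ∉ M.Xa ∧
      sSup {v : ℝ | ∃ p : HistPolicy M, IsMarkov p ∧
          probEvent M p x0 (fun τ => ∃ t, τ.1 t ∈ M.Xa) ≤ 1 / 2 ∧
          v = J M p x0} = 11 / 3 ∧
      sSup {v : ℝ | ∃ p : HistPolicy M,
          probEvent M p x0 (fun τ => ∃ t, τ.1 t ∈ M.Xa) ≤ 1 / 2 ∧
          v = J M p x0} = 4 :=
  ⟨7, 2, by norm_num, by norm_num, MarkovGap.witness, 0, rfl, by simp [MarkovGap.witness],
    MarkovGap.isGreatest_markov_values.csSup_eq, MarkovGap.isGreatest_history_values.csSup_eq⟩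

end
end
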